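/- arXiv:2605.27256 — 5 statements merged into one kernel-verified Lean document; each statement's English description precedes it below -/
import Mathlib

section
/- Let α, β, γ, γ' be real numbers with γ and γ' not nonpositive integers, and let u, v be real numbers with √|u| + √|v| < 1. Then the double series defining the Appell function F₄(α,β;γ,γ';u,v) = Σ_{m,n≥0} (α)_{m+n} (β)_{m+n} u^m v^n / ((γ)_m (γ')_n m! n!) equals the iterated sum Σ_{m≥0} [(α)_m (β)_m / ((γ)_m m!)] u^m · ₂F₁(α+m, β+m; γ'; v), and both converge absolutely. -/
open scoped BigOperators

/-- Pochhammer symbol `(a)_n = a (a+1) ⋯ (a+n-1)`. -/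
noncomputable def poch (a : ℝ) (n : ℕ) : ℝ := ∏ i ∈ Finset.range n, (a + i)

lemma poch_succ (a : ℝ) (n : ℕ) : poch a (n + 1) = poch a n * (a + n) := by
  unfold poch; exact Finset.prod_range_succ _ _

lemma poch_split (a : ℝ) (m n : ℕ) : poch a (m + n) = poch a m * poch (a + m) n := by
  unfold poch
  rw [Finset.prod_range_add]
  congr 1
  refine Finset.prod_congr rfl fun i _ => ?_
  push_cast; ring

lemma poch_ne_zero {a : ℝ} (h : ∀ n : ℕ, a ≠ -(n : ℝ)) (m : ℕ) : poch a m ≠ 0 := by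
  unfold poch
  rw [Finset.prod_ne_zero_iff]
  intro i _ hz
  exact h i (by linarith)

/-- Growth bound for sequences that eventually contract by `ρ`. -/
lemma geomDom {g : ℕ → ℝ} {ρ : ℝ} (hg : ∀ n, 0 ≤ g n) (hρ : 0 < ρ) (M : ℕ)
    (h : ∀ n, M ≤ n → g (n + 1) ≤ ρ * g n) :
    ∃ K : ℝ, 0 < K ∧ ∀ n, g n ≤ K * ρ ^ n := by
  set S : ℝ := ∑ i ∈ Finset.range (M + 1), g i / ρ ^ i with hS
  have hterm : ∀ i ∈ Finset.range (M + 1), 0 ≤ g i / ρ ^ i :=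
    fun i _ => div_nonneg (hg i) (pow_nonneg hρ.le i)
  have hS0 : 0 ≤ S := Finset.sum_nonneg hterm
  refine ⟨1 + S, by linarith, ?_⟩
  have hsmall : ∀ n, n ≤ M → g n ≤ (1 + S) * ρ ^ n := by
    intro n hn
    have hmem : n ∈ Finset.range (M + 1) := Finset.mem_range.mpr (by omega)
    have h1 : g n / ρ ^ n ≤ S := Finset.single_le_sum hterm hmem
    have h2 : g n / ρ ^ n ≤ 1 + S := by linarith
    rw [div_le_iff₀ (pow_pos hρ n)] at h2
    linarith
  intro n
  induction n with
  | zero => exact hsmall 0 (Nat.zero_le M)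
  | succ k ih =>
    by_cases hk : M ≤ k
    · calc g (k + 1) ≤ ρ * g k := h k hk
        _ ≤ ρ * ((1 + S) * ρ ^ k) := by
            exact mul_le_mul_of_nonneg_left ih hρ.le
        _ = (1 + S) * ρ ^ (k + 1) := by ring
    · exact hsmall (k + 1) (by omega)

lemma poch_upper (a : ℝ) {ρ : ℝ} (hρ : 1 < ρ) :
    ∃ K : ℝ, 0 < K ∧ ∀ N : ℕ, |poch a N| ≤ K * ρ ^ N * N.factorial := by
  have hρ0 : 0 < ρ := lt_trans one_pos hρ
  have hrec : ∀ n, ⌈|a| / (ρ - 1)⌉₊ ≤ n →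
      (fun N => |poch a N| / N.factorial) (n + 1) ≤ ρ * (fun N => |poch a N| / N.factorial) n := by
    intro n hn
    have hn' : |a| / (ρ - 1) ≤ (n : ℝ) := le_trans (Nat.le_ceil _) (Nat.cast_le.mpr hn)
    have ha : |a| ≤ (ρ - 1) * n := by
      rw [div_le_iff₀ (by linarith)] at hn'; linarith
    have h1 : |a + n| ≤ ρ * (n + 1) := by
      calc |a + (n:ℝ)| ≤ |a| + |(n:ℝ)| := abs_add_le _ _
        _ = |a| + n := by rw [abs_of_nonneg (by positivity : (0:ℝ) ≤ (n:ℝ))]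
        _ ≤ ρ * (n + 1) := by nlinarith
    have hF : (0:ℝ) < n.factorial := by positivity
    have hstep : |poch a (n + 1)| / ((n:ℕ) + 1).factorial
        = |poch a n| * |a + n| / ((n + 1) * n.factorial) := by
      rw [poch_succ, abs_mul, Nat.factorial_succ]; push_cast; ring
    simp only []
    rw [hstep]
    calc |poch a n| * |a + n| / ((n + 1) * n.factorial)
        ≤ |poch a n| * (ρ * (n + 1)) / ((n + 1) * n.factorial) := by
          apply div_le_div_of_nonneg_right ?_ (by positivity)
          exact mul_le_mul_of_nonneg_left h1 (abs_nonneg _)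
      _ = ρ * (|poch a n| / n.factorial) := by
          field_simp
  obtain ⟨K, hK, hb⟩ := geomDom (g := fun N => |poch a N| / N.factorial)
      (fun n => by positivity) hρ0 ⌈|a| / (ρ - 1)⌉₊ hrec
  refine ⟨K, hK, fun N => ?_⟩
  have h := hb N
  have hF : (0:ℝ) < (N.factorial : ℝ) := by positivity
  rw [div_le_iff₀ hF] at h
  linarith

lemma poch_lower {a : ℝ} (ha : ∀ n : ℕ, a ≠ -(n : ℝ)) {ρ : ℝ} (hρ : 1 < ρ) :
    ∃ K : ℝ, 0 < K ∧ ∀ m : ℕ, (m.factorial : ℝ) ≤ K * ρ ^ m * |poch a m| := by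
  have hρ0 : 0 < ρ := lt_trans one_pos hρ
  have hpz : ∀ m : ℕ, (0:ℝ) < |poch a m| :=
    fun m => abs_pos.mpr (poch_ne_zero ha m)
  have hfz : ∀ m : ℕ, a + (m:ℝ) ≠ 0 := by
    intro m hz; exact ha m (by linarith)
  have hrec : ∀ m, ⌈(1 + ρ * |a|) / (ρ - 1)⌉₊ ≤ m →
      (fun m => (m.factorial : ℝ) / |poch a m|) (m + 1)
        ≤ ρ * (fun m => (m.factorial : ℝ) / |poch a m|) m := by
    intro m hm
    have hm' : (1 + ρ * |a|) / (ρ - 1) ≤ (m : ℝ) :=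
      le_trans (Nat.le_ceil _) (Nat.cast_le.mpr hm)
    have h0 : 1 + ρ * |a| ≤ (ρ - 1) * m := by
      rw [div_le_iff₀ (by linarith)] at hm'; linarith
    have htri : (m:ℝ) - |a| ≤ |a + m| := by
      have : |(m:ℝ)| ≤ |a + m| + |a| := by
        calc |(m:ℝ)| = |(a + m) - a| := by ring_nf
          _ ≤ |a + m| + |a| := abs_sub _ _
      rw [abs_of_nonneg (by positivity : (0:ℝ) ≤ (m:ℝ))] at this
      linarith
    have h1 : (m:ℝ) + 1 ≤ ρ * |a + m| := by nlinarith
    have hap : (0:ℝ) < |a + m| := abs_pos.mpr (hfz m)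
    have hstep : ((m+1).factorial : ℝ) / |poch a (m+1)|
        = ((m:ℝ) + 1) * m.factorial / (|poch a m| * |a + m|) := by
      rw [poch_succ, abs_mul, Nat.factorial_succ]; push_cast; ring
    simp only []
    rw [hstep]
    rw [← mul_div_assoc, div_le_div_iff₀ (mul_pos (hpz m) hap) (hpz m)]
    calc ((m:ℝ) + 1) * ↑m.factorial * |poch a m|
        ≤ (ρ * |a + m|) * ↑m.factorial * |poch a m| := by
          apply mul_le_mul_of_nonneg_right ?_ (hpz m).le
          exact mul_le_mul_of_nonneg_right h1 (by positivity)
      _ = ρ * ↑m.factorial * (|poch a m| * |a + m|) := by ring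
  obtain ⟨K, hK, hb⟩ := geomDom (g := fun m => (m.factorial : ℝ) / |poch a m|)
      (fun m => by positivity) hρ0 _ hrec
  refine ⟨K, hK, fun m => ?_⟩
  have h := hb m
  rw [div_le_iff₀ (hpz m)] at h
  linarith

lemma binom_key {x y : ℝ} (hx : 0 ≤ x) (hy : 0 ≤ y) (m n : ℕ) :
    ((m + n).factorial : ℝ) * x ^ m * y ^ n
      ≤ (x + y) ^ (m + n) * m.factorial * n.factorial := by
  have hexp : (x + y) ^ (m + n)
      = ∑ k ∈ Finset.range (m + n + 1), x ^ k * y ^ (m + n - k) * ((m+n).choose k) :=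
    add_pow x y (m + n)
  have hmem : m ∈ Finset.range (m + n + 1) := Finset.mem_range.mpr (by omega)
  have hsingle : x ^ m * y ^ (m + n - m) * (((m+n).choose m : ℕ) : ℝ)
      ≤ (x + y) ^ (m + n) := by
    rw [hexp]
    exact Finset.single_le_sum (f := fun k => x ^ k * y ^ (m + n - k) * (((m+n).choose k : ℕ) : ℝ)) (fun k _ => by positivity) hmem
  have hc : (((m+n).choose m : ℕ) : ℝ) * m.factorial * n.factorial
      = ((m + n).factorial : ℝ) := by
    rw [← Nat.cast_mul, ← Nat.cast_mul, Nat.choose_symm_add, Nat.add_choose_mul_factorial_mul_factorial]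
  have hsm : m + n - m = n := by omega
  rw [hsm] at hsingle
  calc ((m + n).factorial : ℝ) * x ^ m * y ^ n
      = (x ^ m * y ^ n * ((m+n).choose m)) * m.factorial * n.factorial := by
        rw [← hc]; ring
    _ ≤ (x + y) ^ (m + n) * m.factorial * n.factorial := by
        apply mul_le_mul_of_nonneg_right ?_ (by positivity)
        exact mul_le_mul_of_nonneg_right hsingle (by positivity)

lemma rho_choice {t : ℝ} (ht0 : 0 ≤ t) (ht1 : t < 1) :
    ∃ ρ : ℝ, 1 < ρ ∧ ρ ^ 3 * t ^ 2 < 1 := by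
  refine ⟨1 + (1 - t ^ 2) / 8, by nlinarith, ?_⟩
  have h1 : 0 < 1 - t ^ 2 := by nlinarith
  have h2 : (1 - t ^ 2) / 8 ≤ 1 / 8 := by nlinarith
  nlinarith [sq_nonneg t, sq_nonneg ((1 - t^2)/8), pow_le_one₀ ht0 ht1.le (n := 2),
    mul_nonneg (sq_nonneg ((1-t^2)/8)) h1.le]

/-- Gauss hypergeometric series `₂F₁(a,b;c;z)`. -/
noncomputable def twoF1 (a b c z : ℝ) : ℝ :=
  ∑' n : ℕ, poch a n * poch b n / (poch c n * n.factorial) * z ^ n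

/-- Splitting relation for the fourth Appell function `F₄`: its defining double
series (which converges absolutely for `√|u| + √|v| < 1`, as does the iterated
series) equals the iterated sum
`Σ_m (α)_m (β)_m / ((γ)_m m!) · u^m · ₂F₁(α+m, β+m; γ'; v)`. -/
theorem appell_F4_splitting
    (α β γ γ' u v : ℝ)
    (hγ : ∀ n : ℕ, γ ≠ -(n : ℝ))
    (hγ' : ∀ n : ℕ, γ' ≠ -(n : ℝ))
    (huv : Real.sqrt |u| + Real.sqrt |v| < 1) :
    Summable (fun p : ℕ × ℕ =>
      |poch α (p.1 + p.2) * poch β (p.1 + p.2) * u ^ p.1 * v ^ p.2 /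
        (poch γ p.1 * poch γ' p.2 * p.1.factorial * p.2.factorial)|) ∧
    Summable (fun m : ℕ =>
      |poch α m * poch β m / (poch γ m * m.factorial) * u ^ m *
        twoF1 (α + m) (β + m) γ' v|) ∧
    (∑' p : ℕ × ℕ,
        poch α (p.1 + p.2) * poch β (p.1 + p.2) * u ^ p.1 * v ^ p.2 /
          (poch γ p.1 * poch γ' p.2 * p.1.factorial * p.2.factorial)) =
      ∑' m : ℕ,
        poch α m * poch β m / (poch γ m * m.factorial) * u ^ m *
          twoF1 (α + m) (β + m) γ' v := by
  set x := Real.sqrt |u| with hxdef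
  set y := Real.sqrt |v| with hydef
  have hx : 0 ≤ x := Real.sqrt_nonneg _
  have hy : 0 ≤ y := Real.sqrt_nonneg _
  have hxx : x * x = |u| := Real.mul_self_sqrt (abs_nonneg u)
  have hyy : y * y = |v| := Real.mul_self_sqrt (abs_nonneg v)
  set t := x + y with htdef
  have ht0 : 0 ≤ t := by positivity
  have ht1 : t < 1 := huv
  obtain ⟨ρ, hρ1, hρc⟩ := rho_choice ht0 ht1
  have hρ0 : 0 < ρ := lt_trans one_pos hρ1
  obtain ⟨Ka, hKa, hba⟩ := poch_upper α hρ1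
  obtain ⟨Kb, hKb, hbb⟩ := poch_upper β hρ1
  obtain ⟨Kc, hKc, hbc⟩ := poch_lower hγ hρ1
  obtain ⟨Kd, hKd, hbd⟩ := poch_lower hγ' hρ1
  set C := Ka * Kb * Kc * Kd with hCdef
  have hC : 0 < C := by positivity
  set c := ρ ^ 3 * t ^ 2 with hcdef
  have hc0 : 0 ≤ c := by positivity
  have hc1 : c < 1 := hρc
  have hcpow : ∀ k : ℕ, c ^ k = (ρ ^ k) ^ 3 * (t ^ k) ^ 2 := by
    intro k
    rw [hcdef, mul_pow, ← pow_mul, ← pow_mul, mul_comm 3 k, mul_comm 2 k,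
      pow_mul, pow_mul]
  set f : ℕ × ℕ → ℝ := fun p =>
    poch α (p.1 + p.2) * poch β (p.1 + p.2) * u ^ p.1 * v ^ p.2 /
      (poch γ p.1 * poch γ' p.2 * p.1.factorial * p.2.factorial) with hfdef
  have hbound : ∀ p : ℕ × ℕ, |f p| ≤ C * (c ^ p.1 * c ^ p.2) := by
    rintro ⟨m, n⟩
    have hγm : (0:ℝ) < |poch γ m| := abs_pos.mpr (poch_ne_zero hγ m)
    have hγn : (0:ℝ) < |poch γ' n| := abs_pos.mpr (poch_ne_zero hγ' n)
    have hfm : (0:ℝ) < (m.factorial : ℝ) := by positivity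
    have hfn : (0:ℝ) < (n.factorial : ℝ) := by positivity
    have hdpos : (0:ℝ) < |poch γ m| * |poch γ' n| * m.factorial * n.factorial :=
      mul_pos (mul_pos (mul_pos hγm hγn) hfm) hfn
    have hu' : |u ^ m| = x ^ m * x ^ m := by
      rw [abs_pow, ← hxx, mul_pow]
    have hv' : |v ^ n| = y ^ n * y ^ n := by
      rw [abs_pow, ← hyy, mul_pow]
    have hkey : ((m + n).factorial : ℝ) * x ^ m * y ^ n
        ≤ t ^ (m + n) * m.factorial * n.factorial := binom_key hx hy m n
    have habs : |f (m, n)|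
        = |poch α (m + n)| * |poch β (m + n)| * (x ^ m * x ^ m) * (y ^ n * y ^ n) /
          (|poch γ m| * |poch γ' n| * m.factorial * n.factorial) := by
      simp only [hfdef]
      rw [abs_div, abs_mul, abs_mul, abs_mul, abs_mul, abs_mul, abs_mul,
        hu', hv', Nat.abs_cast, Nat.abs_cast]
    rw [habs, div_le_iff₀ hdpos]
    have hkeynn : (0:ℝ) ≤ ((m + n).factorial : ℝ) * x ^ m * y ^ n := by positivity
    calc |poch α (m + n)| * |poch β (m + n)| * (x ^ m * x ^ m) * (y ^ n * y ^ n)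
        ≤ (Ka * ρ ^ (m + n) * (m + n).factorial) * (Kb * ρ ^ (m + n) * (m + n).factorial)
            * (x ^ m * x ^ m) * (y ^ n * y ^ n) := by
          gcongr
          · exact hba (m + n)
          · exact hbb (m + n)
      _ = (Ka * Kb * (ρ ^ (m + n) * ρ ^ (m + n))) *
            ((((m + n).factorial : ℝ) * x ^ m * y ^ n) *
              (((m + n).factorial : ℝ) * x ^ m * y ^ n)) := by ring
      _ ≤ (Ka * Kb * (ρ ^ (m + n) * ρ ^ (m + n))) *
            ((t ^ (m + n) * m.factorial * n.factorial) *
              (t ^ (m + n) * m.factorial * n.factorial)) := by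
          have h2 : (0:ℝ) ≤ Ka * Kb * (ρ ^ (m + n) * ρ ^ (m + n)) := by positivity
          exact mul_le_mul_of_nonneg_left
            (mul_le_mul hkey hkey hkeynn (by positivity)) h2
      _ = (Ka * Kb * (ρ ^ (m + n) * ρ ^ (m + n)) * (t ^ (m + n) * t ^ (m + n))) *
            ((m.factorial : ℝ) * n.factorial) * ((m.factorial : ℝ) * n.factorial) := by
          ring
      _ ≤ (Ka * Kb * (ρ ^ (m + n) * ρ ^ (m + n)) * (t ^ (m + n) * t ^ (m + n))) *
            ((Kc * ρ ^ m * |poch γ m|) * (Kd * ρ ^ n * |poch γ' n|)) *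
            ((m.factorial : ℝ) * n.factorial) := by
          gcongr
          · exact hbc m
          · exact hbd n
      _ = C * (c ^ m * c ^ n) *
            (|poch γ m| * |poch γ' n| * m.factorial * n.factorial) := by
          rw [hcpow m, hcpow n, hCdef, pow_add ρ m n, pow_add t m n]; ring
  have habs : Summable fun p : ℕ × ℕ => |f p| := by
    refine Summable.of_nonneg_of_le (fun p => abs_nonneg _) hbound ?_
    exact (Summable.mul_of_nonneg (summable_geometric_of_lt_one hc0 hc1)
      (summable_geometric_of_lt_one hc0 hc1) (fun i => pow_nonneg hc0 i)
      (fun i => pow_nonneg hc0 i)).mul_left C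
  have hsum : Summable f := habs.of_abs
  have hfac : ∀ m n : ℕ, f (m, n)
      = (poch α m * poch β m / (poch γ m * m.factorial) * u ^ m) *
        (poch (α + m) n * poch (β + m) n / (poch γ' n * n.factorial) * v ^ n) := by
    intro m n
    simp only [hfdef]
    rw [poch_split α, poch_split β]
    ring
  have hrow : ∀ m : ℕ, Summable fun n => |f (m, n)| := fun m => habs.prod_factor m
  have hinner : ∀ m : ℕ,
      poch α m * poch β m / (poch γ m * m.factorial) * u ^ m *
        twoF1 (α + m) (β + m) γ' v = ∑' n, f (m, n) := by
    intro m
    rw [twoF1, ← tsum_mul_left]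
    exact tsum_congr fun n => (hfac m n).symm
  refine ⟨habs, ?_, ?_⟩
  · have hcol : Summable fun m => ∑' n, |f (m, n)| :=
      ((summable_prod_of_nonneg (fun p => abs_nonneg _)).mp habs).2
    refine Summable.of_nonneg_of_le (fun m => abs_nonneg _) (fun m => ?_) hcol
    rw [hinner m]
    simpa [Real.norm_eq_abs] using
      norm_tsum_le_tsum_norm (f := fun n => f (m, n))
        (by simpa [Real.norm_eq_abs] using hrow m)
  · have := Summable.tsum_prod hsum
    rw [this]
    exact tsum_congr fun m => (hinner m).symm
end

section
/- Let d ≥ 1 be an integer and let Δ, Δ_φ be real numbers such that each of c₁ = (Δ_φ + 2Δ − d)/2, c₂ = (Δ_φ − 2Δ + d)/2, c₃ = (d − Δ_φ)/2 lies in the open interval (0, d/2) (note c₁ + c₂ + 2c₃ = d). Then for every x ∈ ℝ^d with x ≠ 0 and every q ∈ (0,1): q^Δ ∫_{ℝ^d} V_{d−Δ, Δ_φ, Δ}(x₀, x, q·x₀) dx₀ = q^{d−Δ} (1−q)^{Δ_φ−d} ∫_{ℝ^d} ‖x₀ − x‖^{−2c₁} ‖x₀ − q·x‖^{−2c₂}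 ‖x₀‖^{−2c₃} dx₀, where both integrals converge absolutely. (This identifies the scalar one-point thermal conformal partial wave with the scalar two-point defect conformal partial wave for a point-like defect, evaluated in the diagonal configuration x₁ = x, x₂ = qx with exchanged dimensions Δ₁ = Δ, Δ₂ = d−Δ, Δ_k = Δ_φ.) -/
open MeasureTheory Metric Set

/-- Kinematic part of a scalar three-point function:
`V_{Δa Δb Δc}(ya, yb, yc) = ‖ya-yb‖^{Δc-Δa-Δb} ‖ya-yc‖^{Δb-Δa-Δc} ‖yb-yc‖^{Δa-Δb-Δc}`. -/
noncomputable def Vthree (d : ℕ) (Δa Δb Δc : ℝ)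
    (ya yb yc : EuclideanSpace ℝ (Fin d)) : ℝ :=
  ‖ya - yb‖ ^ (Δc - Δa - Δb) * ‖ya - yc‖ ^ (Δb - Δa - Δc) * ‖yb - yc‖ ^ (Δa - Δb - Δc)


lemma euclid_nontrivial {d : ℕ} (hd : 1 ≤ d) : Nontrivial (EuclideanSpace ℝ (Fin d)) := by
  haveI : Nonempty (Fin d) := ⟨⟨0, hd⟩⟩
  exact (WithLp.equiv 2 (Fin d → ℝ)).nontrivial

lemma rpow_anti {u v p : ℝ} (hu : 0 < u) (huv : u ≤ v) (hp : 0 ≤ p) :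
    v ^ (-p) ≤ u ^ (-p) :=
  Real.rpow_le_rpow_of_nonpos hu huv (neg_nonpos.2 hp)

lemma integrableOn_unitball_rpow {d : ℕ} (hd : 1 ≤ d) {p : ℝ} (hp0 : 0 ≤ p) (hpd : p < d) :
    IntegrableOn (fun y : EuclideanSpace ℝ (Fin d) => ‖y‖ ^ (-p)) (ball 0 1) := by
  classical
  haveI := euclid_nontrivial hd
  have hmeas : Measurable fun y : EuclideanSpace ℝ (Fin d) => ‖y‖ ^ (-p) := by fun_prop
  refine ⟨hmeas.aestronglyMeasurable, ?_⟩
  rw [hasFiniteIntegral_iff_norm]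
  set t : ℝ := 1/2 with ht
  have ht0 : (0:ℝ) < t := by norm_num
  have ht1 : t < 1 := by norm_num
  set A : ℕ → Set (EuclideanSpace ℝ (Fin d)) :=
    fun n => closedBall 0 (t ^ n) \ ball 0 (t ^ (n+1)) with hA
  have hcover : ball (0:EuclideanSpace ℝ (Fin d)) 1 ⊆ {0} ∪ ⋃ n, A n := by
    intro y hy
    rcases eq_or_ne y 0 with rfl | hy0
    · exact Or.inl rfl
    right
    have hy1 : ‖y‖ < 1 := by simpa [mem_ball, dist_zero_right] using hy
    have hy0' : 0 < ‖y‖ := norm_pos_iff.2 hy0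
    have hex : ∃ k, t ^ k < ‖y‖ := exists_pow_lt_of_lt_one hy0' ht1
    have hlt : t ^ (Nat.find hex) < ‖y‖ := Nat.find_spec hex
    have hn0 : Nat.find hex ≠ 0 := by
      intro h
      rw [h] at hlt
      simp only [pow_zero] at hlt
      linarith
    obtain ⟨m, hm⟩ := Nat.exists_eq_succ_of_ne_zero hn0
    have hnotm : ¬ t ^ m < ‖y‖ := Nat.find_min hex (by omega)
    refine mem_iUnion.2 ⟨m, ?_, ?_⟩
    · simpa [mem_closedBall, dist_zero_right] using not_lt.1 hnotm
    · simp only [mem_ball, dist_zero_right, not_lt]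
      rw [hm] at hlt
      exact hlt.le
  set B : ENNReal := volume (ball (0 : EuclideanSpace ℝ (Fin d)) 1) with hB
  have hBfin : B < ⊤ := measure_ball_lt_top
  set r : ENNReal := ENNReal.ofReal (t ^ ((d:ℝ) - p)) with hr
  have hr1 : r < 1 := by
    rw [hr]
    have : t ^ ((d:ℝ) - p) < 1 :=
      Real.rpow_lt_one ht0.le ht1 (by
        have : (1:ℝ) ≤ d := by exact_mod_cast hd
        linarith)
    calc ENNReal.ofReal (t ^ ((d:ℝ) - p)) < ENNReal.ofReal 1 :=
          ENNReal.ofReal_lt_ofReal_iff_of_nonneg (Real.rpow_nonneg ht0.le _) |>.2 this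
      _ = 1 := ENNReal.ofReal_one
  have hbound : ∀ n : ℕ, ∫⁻ y in A n, ENNReal.ofReal ‖‖y‖ ^ (-p)‖ ≤
      (ENNReal.ofReal (t ^ (-p)) * B) * r ^ n := by
    intro n
    have hAn_meas : MeasurableSet (A n) := measurableSet_closedBall.diff measurableSet_ball
    have hptwise : ∀ y ∈ A n, ENNReal.ofReal ‖‖y‖ ^ (-p)‖ ≤
        ENNReal.ofReal ((t ^ (n+1)) ^ (-p)) := by
      intro y hy
      have h1 : t ^ (n+1) ≤ ‖y‖ := by
        have := hy.2
        simpa [mem_ball, dist_zero_right, not_lt] using this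
      have h2 : ‖y‖ ^ (-p) ≤ (t ^ (n+1)) ^ (-p) :=
        rpow_anti (pow_pos ht0 _) h1 hp0
      refine ENNReal.ofReal_le_ofReal ?_
      rw [Real.norm_eq_abs, abs_of_nonneg (Real.rpow_nonneg (norm_nonneg _) _)]
      exact h2
    calc ∫⁻ y in A n, ENNReal.ofReal ‖‖y‖ ^ (-p)‖
        ≤ ∫⁻ _ in A n, ENNReal.ofReal ((t ^ (n+1)) ^ (-p)) :=
          setLIntegral_mono' hAn_meas hptwise
      _ = ENNReal.ofReal ((t ^ (n+1)) ^ (-p)) * volume (A n) := setLIntegral_const _ _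
      _ ≤ ENNReal.ofReal ((t ^ (n+1)) ^ (-p)) *
            (ENNReal.ofReal ((t ^ n) ^ d) * B) := by
          gcongr
          have := Measure.addHaar_closedBall (volume : Measure (EuclideanSpace ℝ (Fin d)))
            (0 : EuclideanSpace ℝ (Fin d)) (pow_nonneg ht0.le n)
          rw [finrank_euclideanSpace_fin] at this
          calc volume (A n) ≤ volume (closedBall (0 : EuclideanSpace ℝ (Fin d)) (t ^ n)) :=
                measure_mono diff_subset
            _ = ENNReal.ofReal ((t ^ n) ^ d) * B := this
      _ = (ENNReal.ofReal (t ^ (-p)) * B) * r ^ n := by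
          have key : (t ^ (n+1)) ^ (-p) * (t ^ n) ^ d = t ^ (-p) * (t ^ ((d:ℝ) - p)) ^ n := by
            rw [← Real.rpow_natCast t (n+1), ← Real.rpow_natCast t n,
              ← Real.rpow_mul ht0.le, ← Real.rpow_natCast (t ^ ((n:ℕ):ℝ)) d,
              ← Real.rpow_mul ht0.le, ← Real.rpow_natCast (t ^ ((d:ℝ) - p)) n,
              ← Real.rpow_mul ht0.le, ← Real.rpow_add ht0, ← Real.rpow_add ht0]
            congr 1
            push_cast
            ring
          rw [← ENNReal.ofReal_pow (Real.rpow_nonneg ht0.le _),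
            show ENNReal.ofReal ((t ^ (n + 1)) ^ (-p)) * (ENNReal.ofReal ((t ^ n) ^ d) * B)
              = (ENNReal.ofReal ((t ^ (n + 1)) ^ (-p)) * ENNReal.ofReal ((t ^ n) ^ d)) * B
              from by ring,
            ← ENNReal.ofReal_mul (Real.rpow_nonneg (pow_nonneg ht0.le _) _), key,
            ENNReal.ofReal_mul (Real.rpow_nonneg ht0.le _)]
          ring
  calc ∫⁻ y in ball (0:EuclideanSpace ℝ (Fin d)) 1, ENNReal.ofReal ‖‖y‖ ^ (-p)‖
      ≤ ∫⁻ y in ({0} : Set (EuclideanSpace ℝ (Fin d))) ∪ ⋃ n, A n,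
          ENNReal.ofReal ‖‖y‖ ^ (-p)‖ := lintegral_mono_set hcover
    _ ≤ (∫⁻ y in ({0} : Set (EuclideanSpace ℝ (Fin d))), ENNReal.ofReal ‖‖y‖ ^ (-p)‖)
          + ∫⁻ y in ⋃ n, A n, ENNReal.ofReal ‖‖y‖ ^ (-p)‖ := lintegral_union_le _ _ _
    _ = ∫⁻ y in ⋃ n, A n, ENNReal.ofReal ‖‖y‖ ^ (-p)‖ := by
          rw [setLIntegral_measure_zero _ _ (measure_singleton 0), zero_add]
    _ ≤ ∑' n, ∫⁻ y in A n, ENNReal.ofReal ‖‖y‖ ^ (-p)‖ := lintegral_iUnion_le _ _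
    _ ≤ ∑' n, (ENNReal.ofReal (t ^ (-p)) * B) * r ^ n := ENNReal.tsum_le_tsum hbound
    _ = (ENNReal.ofReal (t ^ (-p)) * B) * ∑' n, r ^ n := ENNReal.tsum_mul_left
    _ < ⊤ := by
          refine ENNReal.mul_lt_top (ENNReal.mul_lt_top ENNReal.ofReal_lt_top hBfin) ?_
          rw [ENNReal.tsum_geometric]
          exact ENNReal.inv_lt_top.2 (tsub_pos_of_lt hr1)

lemma integrableOn_ball_rpow_sub {d : ℕ} (hd : 1 ≤ d) (a : EuclideanSpace ℝ (Fin d))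
    {p ε : ℝ} (hp0 : 0 ≤ p) (hpd : p < d) (hε : ε ≤ 1) :
    IntegrableOn (fun y => ‖y - a‖ ^ (-p)) (ball a ε) := by
  have h1 : IntegrableOn (fun y : EuclideanSpace ℝ (Fin d) => ‖y‖ ^ (-p)) (ball 0 ε) :=
    (integrableOn_unitball_rpow hd hp0 hpd).mono_set (ball_subset_ball hε)
  rw [← integrable_indicator_iff measurableSet_ball] at h1 ⊢
  have heq : (ball a ε).indicator (fun y : EuclideanSpace ℝ (Fin d) => ‖y - a‖ ^ (-p))
      = fun y => (ball (0 : EuclideanSpace ℝ (Fin d)) ε).indicator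
          (fun z => ‖z‖ ^ (-p)) (y - a) := by
    ext y
    by_cases h : y ∈ ball a ε
    · rw [Set.indicator_of_mem h, Set.indicator_of_mem
        (by simpa [mem_ball_iff_norm, dist_eq_norm] using h : y - a ∈ ball (0 : EuclideanSpace ℝ (Fin d)) ε)]
    · rw [Set.indicator_of_notMem h, Set.indicator_of_notMem
        (by simpa [mem_ball_iff_norm, dist_eq_norm] using h)]
  rw [heq]
  exact h1.comp_sub_right a

lemma integrableOn_ball_piece {d : ℕ} (hd : 1 ≤ d) (a b c : EuclideanSpace ℝ (Fin d))
    {p₁ p₂ p₃ ε : ℝ} (hp1 : 0 ≤ p₁) (hp1d : p₁ < d) (hp2 : 0 ≤ p₂) (hp3 : 0 ≤ p₃)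
    (hε : 0 < ε) (hε1 : ε ≤ 1) (hb : 2 * ε ≤ dist a b) (hc : 2 * ε ≤ dist a c) :
    IntegrableOn (fun y => ‖y - a‖ ^ (-p₁) * ‖y - b‖ ^ (-p₂) * ‖y - c‖ ^ (-p₃))
      (ball a ε) := by
  have hmeas : AEStronglyMeasurable
      (fun y : EuclideanSpace ℝ (Fin d) => ‖y - a‖ ^ (-p₁) * ‖y - b‖ ^ (-p₂) * ‖y - c‖ ^ (-p₃))
      (volume.restrict (ball a ε)) := by
    apply Measurable.aestronglyMeasurable
    fun_prop
  have hint : IntegrableOn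
      (fun y : EuclideanSpace ℝ (Fin d) => ‖y - a‖ ^ (-p₁) * ε ^ (-p₂) * ε ^ (-p₃))
      (ball a ε) :=
    ((integrableOn_ball_rpow_sub hd a hp1 hp1d hε1).mul_const _).mul_const _
  refine hint.integrable.mono' hmeas ?_
  filter_upwards [ae_restrict_mem measurableSet_ball] with y hy
  have hya : dist y a < ε := mem_ball.1 hy
  have hyb : ε ≤ ‖y - b‖ := by
    rw [← dist_eq_norm]
    have := dist_triangle a b y
    have h2 : dist y b ≥ dist a b - dist a y := by
      have := dist_triangle a y b
      linarith [dist_comm y b ▸ this]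
    have : dist a y < ε := by rwa [dist_comm]
    linarith
  have hyc : ε ≤ ‖y - c‖ := by
    rw [← dist_eq_norm]
    have h2 : dist y c ≥ dist a c - dist a y := by
      have := dist_triangle a y c
      linarith
    have : dist a y < ε := by rwa [dist_comm]
    linarith
  have h2 : ‖y - b‖ ^ (-p₂) ≤ ε ^ (-p₂) := rpow_anti hε hyb hp2
  have h3 : ‖y - c‖ ^ (-p₃) ≤ ε ^ (-p₃) := rpow_anti hε hyc hp3
  rw [Real.norm_eq_abs, abs_of_nonneg (by positivity)]
  have h1 : (0:ℝ) ≤ ‖y - a‖ ^ (-p₁) := Real.rpow_nonneg (norm_nonneg _) _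
  calc ‖y - a‖ ^ (-p₁) * ‖y - b‖ ^ (-p₂) * ‖y - c‖ ^ (-p₃)
      ≤ ‖y - a‖ ^ (-p₁) * ε ^ (-p₂) * ‖y - c‖ ^ (-p₃) := by
        apply mul_le_mul_of_nonneg_right _ (Real.rpow_nonneg (norm_nonneg _) _)
        exact mul_le_mul_of_nonneg_left h2 h1
    _ ≤ ‖y - a‖ ^ (-p₁) * ε ^ (-p₂) * ε ^ (-p₃) := by
        apply mul_le_mul_of_nonneg_left h3
        positivity

lemma integrable_triple_kernel {d : ℕ} (hd : 1 ≤ d) (a b c : EuclideanSpace ℝ (Fin d))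
    (hab : a ≠ b) (hac : a ≠ c) (hbc : b ≠ c) {p₁ p₂ p₃ : ℝ}
    (h1 : p₁ ∈ Set.Ioo (0:ℝ) d) (h2 : p₂ ∈ Set.Ioo (0:ℝ) d) (h3 : p₃ ∈ Set.Ioo (0:ℝ) d)
    (hsum : (d:ℝ) < p₁ + p₂ + p₃) :
    Integrable (fun y : EuclideanSpace ℝ (Fin d) =>
      ‖y - a‖ ^ (-p₁) * ‖y - b‖ ^ (-p₂) * ‖y - c‖ ^ (-p₃)) := by
  set g : EuclideanSpace ℝ (Fin d) → ℝ :=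
    fun y => ‖y - a‖ ^ (-p₁) * ‖y - b‖ ^ (-p₂) * ‖y - c‖ ^ (-p₃) with hg
  have hgmeas : Measurable g := by fun_prop
  -- choose ε
  set ε : ℝ := min (min 1 (dist a b)) (min (dist a c) (dist b c)) / 2 with hε
  have hdab : 0 < dist a b := dist_pos.2 hab
  have hdac : 0 < dist a c := dist_pos.2 hac
  have hdbc : 0 < dist b c := dist_pos.2 hbc
  have hε0 : 0 < ε := by
    apply div_pos _ two_pos
    simp only [lt_min_iff]
    exact ⟨⟨one_pos, hdab⟩, hdac, hdbc⟩
  have hε1 : ε ≤ 1 := by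
    rw [hε]
    have : min (min 1 (dist a b)) (min (dist a c) (dist b c)) ≤ 1 :=
      le_trans (min_le_left _ _) (min_le_left _ _)
    linarith
  have h2eab : 2 * ε ≤ dist a b := by
    rw [hε]
    have : min (min 1 (dist a b)) (min (dist a c) (dist b c)) ≤ dist a b :=
      le_trans (min_le_left _ _) (min_le_right _ _)
    linarith
  have h2eac : 2 * ε ≤ dist a c := by
    rw [hε]
    have : min (min 1 (dist a b)) (min (dist a c) (dist b c)) ≤ dist a c :=
      le_trans (min_le_right _ _) (min_le_left _ _)
    linarith
  have h2ebc : 2 * ε ≤ dist b c := by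
    rw [hε]
    have : min (min 1 (dist a b)) (min (dist a c) (dist b c)) ≤ dist b c :=
      le_trans (min_le_right _ _) (min_le_right _ _)
    linarith
  -- choose R
  set N : ℝ := max (max ‖a‖ ‖b‖) ‖c‖ with hN
  have hNa : ‖a‖ ≤ N := le_trans (le_max_left _ _) (le_max_left _ _)
  have hNb : ‖b‖ ≤ N := le_trans (le_max_right _ _) (le_max_left _ _)
  have hNc : ‖c‖ ≤ N := le_max_right _ _
  have hN0 : 0 ≤ N := le_trans (norm_nonneg a) hNa
  set R : ℝ := 2 * N + 1 with hR
  -- the five pieces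
  have Ia : IntegrableOn g (ball a ε) :=
    integrableOn_ball_piece hd a b c h1.1.le h1.2 h2.1.le h3.1.le hε0 hε1 h2eab h2eac
  have Ib : IntegrableOn g (ball b ε) := by
    have := integrableOn_ball_piece hd b a c h2.1.le h2.2 h1.1.le h3.1.le hε0 hε1
      (by rwa [dist_comm]) h2ebc
    refine (this.congr_fun ?_ measurableSet_ball)
    intro y _
    simp only [hg]
    ring
  have Ic : IntegrableOn g (ball c ε) := by
    have := integrableOn_ball_piece hd c a b h3.1.le h3.2 h1.1.le h2.1.le hε0 hε1
      (by rwa [dist_comm]) (by rwa [dist_comm])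
    refine (this.congr_fun ?_ measurableSet_ball)
    intro y _
    simp only [hg]
    ring
  -- compact piece
  have Icomp : IntegrableOn g
      (closedBall (0 : EuclideanSpace ℝ (Fin d)) R \ (ball a ε ∪ ball b ε ∪ ball c ε)) := by
    apply ContinuousOn.integrableOn_compact
    · exact (isCompact_closedBall _ _).diff (isOpen_ball.union isOpen_ball |>.union isOpen_ball)
    · intro y hy
      have hya : y ∉ ball a ε := fun h => hy.2 (Or.inl (Or.inl h))
      have hyb : y ∉ ball b ε := fun h => hy.2 (Or.inl (Or.inr h))
      have hyc : y ∉ ball c ε := fun h => hy.2 (Or.inr h)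
      have ha' : ‖y - a‖ ≠ 0 := by
        rw [← dist_eq_norm]
        intro h
        exact hya (by simp [mem_ball, h, hε0])
      have hb' : ‖y - b‖ ≠ 0 := by
        rw [← dist_eq_norm]
        intro h
        exact hyb (by simp [mem_ball, h, hε0])
      have hc' : ‖y - c‖ ≠ 0 := by
        rw [← dist_eq_norm]
        intro h
        exact hyc (by simp [mem_ball, h, hε0])
      apply ContinuousWithinAt.mul
      apply ContinuousWithinAt.mul
      · exact (((continuous_id.sub continuous_const).norm.continuousAt).rpow_const
          (Or.inl ha')).continuousWithinAt
      · exact (((continuous_id.sub continuous_const).norm.continuousAt).rpow_const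
          (Or.inl hb')).continuousWithinAt
      · exact (((continuous_id.sub continuous_const).norm.continuousAt).rpow_const
          (Or.inl hc')).continuousWithinAt
  -- tail piece
  have Itail : IntegrableOn g (closedBall (0 : EuclideanSpace ℝ (Fin d)) R)ᶜ := by
    have hfin : Integrable (fun y : EuclideanSpace ℝ (Fin d) =>
        (2:ℝ) ^ p₁ * 2 ^ p₂ * 2 ^ p₃ * (1 + ‖y‖) ^ (-(p₁ + p₂ + p₃))) := by
      apply Integrable.const_mul
      apply integrable_one_add_norm (r := p₁ + p₂ + p₃)
      rwa [finrank_euclideanSpace_fin]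
    refine (hfin.integrableOn).integrable.mono' (hgmeas.aestronglyMeasurable.restrict) ?_
    filter_upwards [ae_restrict_mem measurableSet_closedBall.compl] with y hy
    have hyR : R < ‖y‖ := by
      simpa [mem_closedBall, dist_zero_right, not_le] using hy
    have hy1 : (0:ℝ) < 1 + ‖y‖ := by positivity
    have key : ∀ z : EuclideanSpace ℝ (Fin d), ‖z‖ ≤ N → (1 + ‖y‖) / 2 ≤ ‖y - z‖ := by
      intro z hz
      have := norm_sub_norm_le y z
      have : ‖y‖ - N ≤ ‖y - z‖ := by linarith [norm_sub_norm_le y z]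
      have h2 : (1 + ‖y‖) / 2 ≤ ‖y‖ - N := by
        rw [hR] at hyR
        linarith
      linarith
    have bnd : ∀ (z : EuclideanSpace ℝ (Fin d)) (p : ℝ), 0 ≤ p → ‖z‖ ≤ N →
        ‖y - z‖ ^ (-p) ≤ 2 ^ p * (1 + ‖y‖) ^ (-p) := by
      intro z p hp hz
      have h1' : ((1 + ‖y‖) / 2) ^ (-p) ≤ 2 ^ p * (1 + ‖y‖) ^ (-p) := by
        rw [Real.div_rpow (by positivity) (by norm_num : (0:ℝ) ≤ 2),
          Real.rpow_neg (by norm_num : (0:ℝ) ≤ 2), div_eq_mul_inv, inv_inv, mul_comm]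
      exact le_trans (rpow_anti (by positivity) (key z hz) hp) h1'
    rw [Real.norm_eq_abs, abs_of_nonneg (by positivity)]
    have e1 := bnd a p₁ h1.1.le hNa
    have e2 := bnd b p₂ h2.1.le hNb
    have e3 := bnd c p₃ h3.1.le hNc
    have hsplit : (1 + ‖y‖) ^ (-(p₁ + p₂ + p₃))
        = (1 + ‖y‖) ^ (-p₁) * (1 + ‖y‖) ^ (-p₂) * (1 + ‖y‖) ^ (-p₃) := by
      rw [← Real.rpow_add hy1, ← Real.rpow_add hy1]
      ring_nf
    rw [hsplit]
    calc ‖y - a‖ ^ (-p₁) * ‖y - b‖ ^ (-p₂) * ‖y - c‖ ^ (-p₃)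
        ≤ (2 ^ p₁ * (1 + ‖y‖) ^ (-p₁)) * (2 ^ p₂ * (1 + ‖y‖) ^ (-p₂))
            * (2 ^ p₃ * (1 + ‖y‖) ^ (-p₃)) := by
          apply mul_le_mul _ e3 (Real.rpow_nonneg (norm_nonneg _) _) (by positivity)
          exact mul_le_mul e1 e2 (Real.rpow_nonneg (norm_nonneg _) _) (by positivity)
      _ = 2 ^ p₁ * 2 ^ p₂ * 2 ^ p₃ * ((1 + ‖y‖) ^ (-p₁) * (1 + ‖y‖) ^ (-p₂)
            * (1 + ‖y‖) ^ (-p₃)) := by ring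
  -- combine
  rw [← integrableOn_univ]
  have hcover : (univ : Set (EuclideanSpace ℝ (Fin d))) ⊆
      (ball a ε ∪ ball b ε ∪ ball c ε) ∪
      (closedBall (0 : EuclideanSpace ℝ (Fin d)) R \ (ball a ε ∪ ball b ε ∪ ball c ε)) ∪
      (closedBall (0 : EuclideanSpace ℝ (Fin d)) R)ᶜ := by
    intro y _
    by_cases hy : y ∈ closedBall (0 : EuclideanSpace ℝ (Fin d)) R
    · by_cases hy2 : y ∈ ball a ε ∪ ball b ε ∪ ball c ε
      · exact Or.inl (Or.inl hy2)
      · exact Or.inl (Or.inr ⟨hy, hy2⟩)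
    · exact Or.inr hy
  exact (((Ia.union Ib).union Ic).union Icomp |>.union Itail).mono_set hcover

/-- The scalar one-point thermal conformal partial wave coincides with the scalar
two-point defect conformal partial wave for a point-like defect in the diagonal
configuration `x₁ = x`, `x₂ = qx`, with dimensions `Δ₁ = Δ`, `Δ₂ = d-Δ`, `Δ_k = Δ_φ`:
`q^Δ ∫ V_{d-Δ,Δφ,Δ}(x₀, x, qx₀) dx₀
  = q^{d-Δ} (1-q)^{Δφ-d} ∫ ‖x₀-x‖^{-2c₁} ‖x₀-qx‖^{-2c₂} ‖x₀‖^{-2c₃} dx₀`,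
both integrals being absolutely convergent. -/
theorem thermal_CPW_eq_defect_CPW
    (d : ℕ) (hd : 1 ≤ d) (Δ Δφ : ℝ)
    (hc₁ : (Δφ + 2 * Δ - d) / 2 ∈ Set.Ioo (0 : ℝ) ((d : ℝ) / 2))
    (hc₂ : (Δφ - 2 * Δ + d) / 2 ∈ Set.Ioo (0 : ℝ) ((d : ℝ) / 2))
    (hc₃ : ((d : ℝ) - Δφ) / 2 ∈ Set.Ioo (0 : ℝ) ((d : ℝ) / 2))
    (x : EuclideanSpace ℝ (Fin d)) (hx : x ≠ 0)
    (q : ℝ) (hq : q ∈ Set.Ioo (0 : ℝ) 1) :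
    Integrable (fun x₀ : EuclideanSpace ℝ (Fin d) =>
      Vthree d ((d : ℝ) - Δ) Δφ Δ x₀ x (q • x₀)) ∧
    Integrable (fun x₀ : EuclideanSpace ℝ (Fin d) =>
      ‖x₀ - x‖ ^ (-(Δφ + 2 * Δ - (d : ℝ))) * ‖x₀ - q • x‖ ^ (-(Δφ - 2 * Δ + (d : ℝ))) *
        ‖x₀‖ ^ (-((d : ℝ) - Δφ))) ∧
    q ^ Δ * ∫ x₀ : EuclideanSpace ℝ (Fin d),
        Vthree d ((d : ℝ) - Δ) Δφ Δ x₀ x (q • x₀) =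
      q ^ ((d : ℝ) - Δ) * (1 - q) ^ (Δφ - (d : ℝ)) *
        ∫ x₀ : EuclideanSpace ℝ (Fin d),
          ‖x₀ - x‖ ^ (-(Δφ + 2 * Δ - (d : ℝ))) * ‖x₀ - q • x‖ ^ (-(Δφ - 2 * Δ + (d : ℝ))) *
            ‖x₀‖ ^ (-((d : ℝ) - Δφ)) := by
  obtain ⟨hq0, hq1⟩ := hq
  have h1q : (0:ℝ) < 1 - q := by linarith
  set P1 : ℝ := Δφ + 2 * Δ - (d:ℝ) with hP1
  set P2 : ℝ := Δφ - 2 * Δ + (d:ℝ) with hP2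
  set P3 : ℝ := (d:ℝ) - Δφ with hP3
  have hP1' : P1 ∈ Set.Ioo (0:ℝ) (d:ℝ) := ⟨by have := hc₁.1; linarith, by have := hc₁.2; linarith⟩
  have hP2' : P2 ∈ Set.Ioo (0:ℝ) (d:ℝ) := ⟨by have := hc₂.1; linarith, by have := hc₂.2; linarith⟩
  have hP3' : P3 ∈ Set.Ioo (0:ℝ) (d:ℝ) := ⟨by have := hc₃.1; linarith, by have := hc₃.2; linarith⟩
  have hsum : (d:ℝ) < P1 + P2 + P3 := by
    have := hc₃.2
    simp only [hP1, hP2, hP3]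
    have hφ : 0 < Δφ := by linarith
    linarith
  set g : EuclideanSpace ℝ (Fin d) → ℝ := fun x₀ =>
    ‖x₀ - x‖ ^ (-P1) * ‖x₀ - q • x‖ ^ (-P2) * ‖x₀‖ ^ (-P3) with hgdef
  -- integrability of g
  have hab : x ≠ q • x := by
    intro h
    have h2 : (1 - q) • x = 0 := by
      rw [sub_smul, one_smul, ← h, sub_self]
    rcases smul_eq_zero.1 h2 with h3 | h3
    · linarith
    · exact hx h3
  have hbc : q • x ≠ 0 := smul_ne_zero (ne_of_gt hq0) hx
  have hg_int : Integrable g := by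
    have := integrable_triple_kernel hd x (q • x) 0 hab hx hbc hP1' hP2' hP3' hsum
    simpa only [sub_zero] using this
  -- pointwise identity
  set K : ℝ := (1 - q) ^ (-P3) * q ^ (P2 + P3) with hK
  have key : ∀ y : EuclideanSpace ℝ (Fin d),
      Vthree d ((d : ℝ) - Δ) Δφ Δ y x (q • y) = K * g (q • y) := by
    intro y
    have e1 : Δ - ((d:ℝ) - Δ) - Δφ = -P2 := by rw [hP2]; ring
    have e2 : Δφ - ((d:ℝ) - Δ) - Δ = -P3 := by rw [hP3]; ring
    have e3 : ((d:ℝ) - Δ) - Δφ - Δ = -P1 := by rw [hP1]; ring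
    have n1 : y - q • y = (1 - q) • y := by rw [sub_smul, one_smul]
    have n2 : q • y - q • x = q • (y - x) := (smul_sub q y x).symm
    rw [Vthree, e1, e2, e3, norm_sub_rev x (q • y), hgdef]
    simp only []
    rw [n1, n2, norm_smul, norm_smul q (y - x), norm_smul q y,
      Real.norm_eq_abs, Real.norm_eq_abs, abs_of_pos h1q, abs_of_pos hq0,
      Real.mul_rpow h1q.le (norm_nonneg _), Real.mul_rpow hq0.le (norm_nonneg _),
      Real.mul_rpow hq0.le (norm_nonneg _)]
    have hqprod : q ^ (P2 + P3) * q ^ (-P2) * q ^ (-P3) = 1 := by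
      rw [← Real.rpow_add hq0, ← Real.rpow_add hq0,
        show P2 + P3 + -P2 + -P3 = 0 by ring, Real.rpow_zero]
    rw [hK]
    linear_combination
      (-((1 - q) ^ (-P3) * ‖y - x‖ ^ (-P2) * ‖y‖ ^ (-P3) * ‖q • y - x‖ ^ (-P1))) * hqprod
  -- integrability of f
  have hgq_int : Integrable (fun y : EuclideanSpace ℝ (Fin d) => g (q • y)) :=
    (integrable_comp_smul_iff volume g (ne_of_gt hq0)).2 hg_int
  have hf_int : Integrable (fun x₀ : EuclideanSpace ℝ (Fin d) =>
      Vthree d ((d : ℝ) - Δ) Δφ Δ x₀ x (q • x₀)) := by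
    have : (fun x₀ : EuclideanSpace ℝ (Fin d) => Vthree d ((d : ℝ) - Δ) Δφ Δ x₀ x (q • x₀))
        = fun x₀ => K * g (q • x₀) := funext key
    rw [this]
    exact hgq_int.const_mul K
  refine ⟨hf_int, hg_int, ?_⟩
  -- the integral identity
  have hint : ∫ x₀ : EuclideanSpace ℝ (Fin d), Vthree d ((d : ℝ) - Δ) Δφ Δ x₀ x (q • x₀)
      = K * (q ^ (-(d:ℝ)) * ∫ x₀, g x₀) := by
    rw [funext key, integral_const_mul]
    congr 1
    rw [Measure.integral_comp_smul volume g q, finrank_euclideanSpace_fin]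
    rw [abs_of_nonneg (by positivity), ← Real.rpow_natCast q d, ← Real.rpow_neg hq0.le]
    rw [smul_eq_mul]
  rw [hint]
  have hcoef : q ^ Δ * (K * q ^ (-(d:ℝ))) = q ^ ((d:ℝ) - Δ) * (1 - q) ^ (Δφ - (d:ℝ)) := by
    rw [hK]
    have e4 : -P3 = Δφ - (d:ℝ) := by rw [hP3]; ring
    rw [e4]
    have : q ^ Δ * (q ^ (P2 + P3) * q ^ (-(d:ℝ))) = q ^ ((d:ℝ) - Δ) := by
      rw [← Real.rpow_add hq0, ← Real.rpow_add hq0]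
      congr 1
      rw [hP2, hP3]; ring
    calc q ^ Δ * ((1 - q) ^ (Δφ - (d:ℝ)) * q ^ (P2 + P3) * q ^ (-(d:ℝ)))
        = (q ^ Δ * (q ^ (P2 + P3) * q ^ (-(d:ℝ)))) * (1 - q) ^ (Δφ - (d:ℝ)) := by ring
      _ = q ^ ((d:ℝ) - Δ) * (1 - q) ^ (Δφ - (d:ℝ)) := by rw [this]
  calc q ^ Δ * (K * (q ^ (-(d:ℝ)) * ∫ x₀, g x₀))
      = (q ^ Δ * (K * q ^ (-(d:ℝ)))) * ∫ x₀, g x₀ := by ring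
    _ = q ^ ((d:ℝ) - Δ) * (1 - q) ^ (Δφ - (d:ℝ)) * ∫ x₀, g x₀ := by rw [hcoef]
end

section
/- Let d ≥ 1 be an integer and let a₁, a₂, a₃ be real numbers with 0 < a_i < d/2 for i = 1, 2, 3 and a₁ + a₂ + a₃ > d/2. Then for any distinct nonzero points x₁, x₂ ∈ ℝ^d, the function x₀ ↦ ‖x₀ − x₁‖^{−2a₁} ‖x₀ − x₂‖^{−2a₂} ‖x₀‖^{−2a₃} is Lebesgue integrable on ℝ^d. -/
open MeasureTheory
open Real Set Metric
open scoped ENNReal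

lemma lemA (d : ℕ) (hd : 1 ≤ d) {s : ℝ} (hs0 : 0 < s) (hsd : s < d) (R : ℝ) :
    IntegrableOn (fun x : EuclideanSpace ℝ (Fin d) => ‖x‖ ^ (-s)) (closedBall 0 R) := by
  have hmeas : Measurable fun x : EuclideanSpace ℝ (Fin d) => ‖x‖ ^ (-s) := by fun_prop
  have hnn : ∀ x : EuclideanSpace ℝ (Fin d), 0 ≤ ‖x‖ ^ (-s) := fun x => rpow_nonneg (norm_nonneg _) _
  constructor
  · exact (hmeas.aestronglyMeasurable).restrict
  rw [HasFiniteIntegral, lintegral_enorm_of_nonneg hnn]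
  rw [lintegral_eq_lintegral_meas_le _ (Filter.Eventually.of_forall hnn) hmeas.aemeasurable]
  set μ := (volume : Measure (EuclideanSpace ℝ (Fin d)))
  have hfin : μ (closedBall 0 R) < ∞ := measure_closedBall_lt_top
  -- superlevel set bound
  have hsub : ∀ t : ℝ, 0 < t →
      {a : EuclideanSpace ℝ (Fin d) | t ≤ ‖a‖ ^ (-s)} ⊆ closedBall 0 (t ^ (-s⁻¹)) := by
    intro t ht a ha
    simp only [mem_setOf_eq] at ha
    have hapos : 0 < ‖a‖ := by
      rcases eq_or_lt_of_le (norm_nonneg a) with h | h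
      · exfalso
        rw [← h, zero_rpow (neg_ne_zero.mpr hs0.ne')] at ha
        exact absurd (ht.trans_le ha) (lt_irrefl 0)
      · exact h
    rw [mem_closedBall_zero_iff]
    have h2 := rpow_le_rpow_of_nonpos ht ha (neg_nonpos.mpr (inv_nonneg.mpr hs0.le))
    rwa [← Real.rpow_mul hapos.le, neg_mul_neg, mul_inv_cancel₀ hs0.ne', rpow_one] at h2
  set f : ℝ → ℝ≥0∞ := fun t => (μ.restrict (closedBall 0 R)) {a | t ≤ ‖a‖ ^ (-s)} with hf
  have hb1 : ∀ t ∈ Ioi (0:ℝ), f t ≤ μ (closedBall 0 R) := by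
    intro t _
    show (μ.restrict (closedBall 0 R)) {a | t ≤ ‖a‖ ^ (-s)} ≤ μ (closedBall 0 R)
    rw [Measure.restrict_apply' measurableSet_closedBall]
    exact measure_mono inter_subset_right
  have hb2 : ∀ t ∈ Ioi (1:ℝ), f t ≤ ENNReal.ofReal (t ^ (-s⁻¹ * d)) * μ (ball 0 1) := by
    intro t ht
    have ht0 : (0:ℝ) < t := lt_trans one_pos ht
    have hle : f t ≤ μ (closedBall 0 (t ^ (-s⁻¹))) := by
      show (μ.restrict (closedBall 0 R)) {a | t ≤ ‖a‖ ^ (-s)} ≤ μ (closedBall 0 (t ^ (-s⁻¹)))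
      rw [Measure.restrict_apply' measurableSet_closedBall]
      exact measure_mono (inter_subset_left.trans (hsub t ht0))
    refine hle.trans (le_of_eq ?_)
    rw [Measure.addHaar_closedBall μ 0 (rpow_nonneg ht0.le _), ← Real.rpow_natCast (t ^ (-s⁻¹)) _,
      ← Real.rpow_mul ht0.le, finrank_euclideanSpace_fin]
  calc ∫⁻ t in Ioi (0:ℝ), f t
      ≤ ∫⁻ t in Ioc (0:ℝ) 1 ∪ Ioi 1, f t := lintegral_mono_set Ioi_subset_Ioc_union_Ioi
    _ ≤ (∫⁻ t in Ioc (0:ℝ) 1, f t) + ∫⁻ t in Ioi (1:ℝ), f t := lintegral_union_le _ _ _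
    _ < ∞ := by
        refine ENNReal.add_lt_top.2 ⟨?_, ?_⟩
        · calc (∫⁻ t in Ioc (0:ℝ) 1, f t) ≤ ∫⁻ _ in Ioc (0:ℝ) 1, μ (closedBall 0 R) :=
              setLIntegral_mono' measurableSet_Ioc (fun t ht => hb1 t ht.1)
            _ = μ (closedBall 0 R) * volume (Ioc (0:ℝ) 1) := setLIntegral_const _ _
            _ < ∞ := ENNReal.mul_lt_top hfin (by simp)
        · calc (∫⁻ t in Ioi (1:ℝ), f t)
              ≤ ∫⁻ t in Ioi (1:ℝ), ENNReal.ofReal (t ^ (-s⁻¹ * d)) * μ (ball 0 1) :=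
                setLIntegral_mono' measurableSet_Ioi hb2
            _ = (∫⁻ t in Ioi (1:ℝ), ENNReal.ofReal (t ^ (-s⁻¹ * d))) * μ (ball 0 1) :=
                lintegral_mul_const' _ _ measure_ball_lt_top.ne
            _ < ∞ := by
                refine ENNReal.mul_lt_top ?_ measure_ball_lt_top
                refine IntegrableOn.setLIntegral_lt_top ?_
                refine integrableOn_Ioi_rpow_of_lt ?_ one_pos
                rw [neg_mul, neg_lt_neg_iff]
                rw [inv_mul_eq_div, lt_div_iff₀ hs0, one_mul]
                exact hsd

lemma lemA' (d : ℕ) (hd : 1 ≤ d) {s : ℝ} (hs0 : 0 < s) (hsd : s < d)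
    (c : EuclideanSpace ℝ (Fin d)) (R : ℝ) :
    IntegrableOn (fun x : EuclideanSpace ℝ (Fin d) => ‖x - c‖ ^ (-s)) (closedBall c R) := by
  have h0 : Integrable ((closedBall (0 : EuclideanSpace ℝ (Fin d)) R).indicator
      fun y => ‖y‖ ^ (-s)) :=
    (integrable_indicator_iff measurableSet_closedBall).2 (lemA d hd hs0 hsd R)
  refine (integrable_indicator_iff measurableSet_closedBall).mp ?_
  have key : (closedBall c R).indicator (fun x : EuclideanSpace ℝ (Fin d) => ‖x - c‖ ^ (-s))
      = fun x => (closedBall (0 : EuclideanSpace ℝ (Fin d)) R).indicator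
          (fun y => ‖y‖ ^ (-s)) (x - c) := by
    funext x
    by_cases hx : x ∈ closedBall c R
    · rw [Set.indicator_of_mem hx, Set.indicator_of_mem (by
        simpa [mem_closedBall, dist_eq_norm] using hx)]
    · rw [Set.indicator_of_notMem hx, Set.indicator_of_notMem (by
        simpa [mem_closedBall, dist_eq_norm] using hx)]
  rw [key]
  exact h0.comp_sub_right c


/-- Integrability of the integrand of the thermal conformal integral
`T₂ = ∫_{ℝ^d} ‖x₀-x₁‖^{-2a₁} ‖x₀-x₂‖^{-2a₂} ‖x₀‖^{-2a₃} dx₀`: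
if `0 < aᵢ < d/2` for `i = 1,2,3` and `a₁ + a₂ + a₃ > d/2`, then for any distinct
nonzero `x₁, x₂ ∈ ℝ^d` the function
`x₀ ↦ ‖x₀-x₁‖^{-2a₁} ‖x₀-x₂‖^{-2a₂} ‖x₀‖^{-2a₃}` is Lebesgue integrable on `ℝ^d`. -/
theorem thermal_integral_integrable
    (d : ℕ) (hd : 1 ≤ d) (a₁ a₂ a₃ : ℝ)
    (h₁ : 0 < a₁) (h₁' : a₁ < (d : ℝ) / 2)
    (h₂ : 0 < a₂) (h₂' : a₂ < (d : ℝ) / 2)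
    (h₃ : 0 < a₃) (h₃' : a₃ < (d : ℝ) / 2)
    (hs : (d : ℝ) / 2 < a₁ + a₂ + a₃)
    (x₁ x₂ : EuclideanSpace ℝ (Fin d))
    (hx₁ : x₁ ≠ 0) (hx₂ : x₂ ≠ 0) (hne : x₁ ≠ x₂) :
    Integrable (fun x₀ : EuclideanSpace ℝ (Fin d) =>
      ‖x₀ - x₁‖ ^ (-(2 * a₁)) * ‖x₀ - x₂‖ ^ (-(2 * a₂)) * ‖x₀‖ ^ (-(2 * a₃))) := by
  set f : EuclideanSpace ℝ (Fin d) → ℝ := fun x₀ =>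
    ‖x₀ - x₁‖ ^ (-(2 * a₁)) * ‖x₀ - x₂‖ ^ (-(2 * a₂)) * ‖x₀‖ ^ (-(2 * a₃)) with hfdef
  have hmeasf : Measurable f := by fun_prop
  have hfnn : ∀ x : EuclideanSpace ℝ (Fin d), 0 ≤ f x := fun x => by
    simp only [hfdef]; positivity
  set ε : ℝ := min (min ‖x₁‖ ‖x₂‖) ‖x₁ - x₂‖ / 2 with hεdef
  have hε : 0 < ε := by
    have h1 : 0 < ‖x₁‖ := norm_pos_iff.2 hx₁
    have h2 : 0 < ‖x₂‖ := norm_pos_iff.2 hx₂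
    have h3 : 0 < ‖x₁ - x₂‖ := norm_pos_iff.2 (sub_ne_zero.2 hne)
    have : 0 < min (min ‖x₁‖ ‖x₂‖) ‖x₁ - x₂‖ := lt_min (lt_min h1 h2) h3
    simpa [hεdef] using half_pos this
  have hε1 : 2 * ε ≤ ‖x₁‖ := by
    have := min_le_left (min ‖x₁‖ ‖x₂‖) ‖x₁ - x₂‖
    have := min_le_left ‖x₁‖ ‖x₂‖
    simp only [hεdef]; linarith
  have hε2 : 2 * ε ≤ ‖x₂‖ := by
    have := min_le_left (min ‖x₁‖ ‖x₂‖) ‖x₁ - x₂‖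
    have := min_le_right ‖x₁‖ ‖x₂‖
    simp only [hεdef]; linarith
  have hε3 : 2 * ε ≤ ‖x₁ - x₂‖ := by
    have := min_le_right (min ‖x₁‖ ‖x₂‖) ‖x₁ - x₂‖
    simp only [hεdef]; linarith
  set M : ℝ := 2 * ‖x₁‖ + 2 * ‖x₂‖ + 1 with hMdef
  set S₁ : Set (EuclideanSpace ℝ (Fin d)) := Metric.closedBall x₁ ε with hS₁
  set S₂ : Set (EuclideanSpace ℝ (Fin d)) := Metric.closedBall x₂ ε with hS₂
  set S₃ : Set (EuclideanSpace ℝ (Fin d)) := Metric.closedBall 0 ε with hS₃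
  set K : Set (EuclideanSpace ℝ (Fin d)) := Metric.closedBall 0 M \ (S₁ ∪ S₂ ∪ S₃) with hK
  set T : Set (EuclideanSpace ℝ (Fin d)) := {x : EuclideanSpace ℝ (Fin d) | M ≤ ‖x‖} with hT
  have hTmeas : MeasurableSet T := measurableSet_le measurable_const measurable_norm
  have h2a₁ : 2 * a₁ < (d : ℝ) := by linarith
  have h2a₂ : 2 * a₂ < (d : ℝ) := by linarith
  have h2a₃ : 2 * a₃ < (d : ℝ) := by linarith
  -- monotonicity helper
  have hrp : ∀ (b c p : ℝ), 0 < c → c ≤ b → 0 < p → b ^ (-p) ≤ c ^ (-p) := fun b c p hc hcb hp =>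
    Real.rpow_le_rpow_of_nonpos hc hcb (neg_nonpos.2 hp.le)
  -- Integrability on S₁
  have hI1 : IntegrableOn f S₁ := by
    refine Integrable.mono'
      (g := fun x => (ε ^ (-(2 * a₂)) * ε ^ (-(2 * a₃))) * ‖x - x₁‖ ^ (-(2 * a₁)))
      ((lemA' d hd (by positivity) h2a₁ x₁ ε).const_mul _)
      hmeasf.aestronglyMeasurable.restrict ?_
    filter_upwards [self_mem_ae_restrict (measurableSet_closedBall (x := x₁) (ε := ε))]
      with x hx
    have hx1 : ‖x - x₁‖ ≤ ε := by
      rw [hS₁, Metric.mem_closedBall, dist_eq_norm] at hx; exact hx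
    have hd2 : ε ≤ ‖x - x₂‖ := by
      have htri : ‖x₁ - x₂‖ ≤ ‖x₁ - x‖ + ‖x - x₂‖ := norm_sub_le_norm_sub_add_norm_sub _ _ _
      rw [norm_sub_rev x₁ x] at htri; linarith
    have hd3 : ε ≤ ‖x‖ := by
      have htri : ‖x₁‖ ≤ ‖x₁ - x‖ + ‖x‖ := by
        simpa using norm_add_le (x₁ - x) x
      rw [norm_sub_rev x₁ x] at htri; linarith
    rw [Real.norm_eq_abs, abs_of_nonneg (hfnn x)]
    calc f x ≤ ‖x - x₁‖ ^ (-(2 * a₁)) * ε ^ (-(2 * a₂)) * ε ^ (-(2 * a₃)) := by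
          rw [hfdef]
          exact mul_le_mul (mul_le_mul le_rfl (hrp _ _ _ hε hd2 (by positivity))
            (Real.rpow_nonneg (norm_nonneg _) _) (Real.rpow_nonneg (norm_nonneg _) _))
            (hrp _ _ _ hε hd3 (by positivity)) (Real.rpow_nonneg (norm_nonneg _) _)
            (by positivity)
      _ = (ε ^ (-(2 * a₂)) * ε ^ (-(2 * a₃))) * ‖x - x₁‖ ^ (-(2 * a₁)) := by ring
  -- Integrability on S₂
  have hI2 : IntegrableOn f S₂ := by
    refine Integrable.mono'
      (g := fun x => (ε ^ (-(2 * a₁)) * ε ^ (-(2 * a₃))) * ‖x - x₂‖ ^ (-(2 * a₂)))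
      ((lemA' d hd (by positivity) h2a₂ x₂ ε).const_mul _)
      hmeasf.aestronglyMeasurable.restrict ?_
    filter_upwards [self_mem_ae_restrict (measurableSet_closedBall (x := x₂) (ε := ε))]
      with x hx
    have hx2 : ‖x - x₂‖ ≤ ε := by
      rw [hS₂, Metric.mem_closedBall, dist_eq_norm] at hx; exact hx
    have hd1 : ε ≤ ‖x - x₁‖ := by
      have htri : ‖x₁ - x₂‖ ≤ ‖x₁ - x‖ + ‖x - x₂‖ := norm_sub_le_norm_sub_add_norm_sub _ _ _
      rw [norm_sub_rev x₁ x] at htri; linarith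
    have hd3 : ε ≤ ‖x‖ := by
      have htri : ‖x₂‖ ≤ ‖x₂ - x‖ + ‖x‖ := by
        simpa using norm_add_le (x₂ - x) x
      rw [norm_sub_rev x₂ x] at htri; linarith
    rw [Real.norm_eq_abs, abs_of_nonneg (hfnn x)]
    calc f x ≤ ε ^ (-(2 * a₁)) * ‖x - x₂‖ ^ (-(2 * a₂)) * ε ^ (-(2 * a₃)) := by
          rw [hfdef]
          exact mul_le_mul (mul_le_mul (hrp _ _ _ hε hd1 (by positivity)) le_rfl
            (Real.rpow_nonneg (norm_nonneg _) _) (Real.rpow_nonneg hε.le _))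
            (hrp _ _ _ hε hd3 (by positivity)) (Real.rpow_nonneg (norm_nonneg _) _)
            (by positivity)
      _ = (ε ^ (-(2 * a₁)) * ε ^ (-(2 * a₃))) * ‖x - x₂‖ ^ (-(2 * a₂)) := by ring
  -- Integrability on S₃
  have hI3 : IntegrableOn f S₃ := by
    refine Integrable.mono'
      (g := fun x => (ε ^ (-(2 * a₁)) * ε ^ (-(2 * a₂))) * ‖x‖ ^ (-(2 * a₃)))
      ((lemA d hd (by positivity) h2a₃ ε).const_mul _)
      hmeasf.aestronglyMeasurable.restrict ?_
    filter_upwards [self_mem_ae_restrict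
      (measurableSet_closedBall (x := (0 : EuclideanSpace ℝ (Fin d))) (ε := ε))] with x hx
    have hx3 : ‖x‖ ≤ ε := by
      rw [hS₃, Metric.mem_closedBall, dist_zero_right] at hx; exact hx
    have hd1 : ε ≤ ‖x - x₁‖ := by
      have htri : ‖x₁‖ ≤ ‖x‖ + ‖x - x₁‖ := by
        have := norm_add_le x (x₁ - x)
        simpa [norm_sub_rev x₁ x] using this
      rw [norm_sub_rev x x₁] at htri ⊢
      linarith [norm_sub_rev x₁ x ▸ htri]
    have hd2 : ε ≤ ‖x - x₂‖ := by
      have htri : ‖x₂‖ ≤ ‖x‖ + ‖x₂ - x‖ := by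
        simpa using norm_add_le x (x₂ - x)
      rw [norm_sub_rev x x₂]
      linarith
    rw [Real.norm_eq_abs, abs_of_nonneg (hfnn x)]
    calc f x ≤ ε ^ (-(2 * a₁)) * ε ^ (-(2 * a₂)) * ‖x‖ ^ (-(2 * a₃)) := by
          rw [hfdef]
          exact mul_le_mul (mul_le_mul (hrp _ _ _ hε hd1 (by positivity))
            (hrp _ _ _ hε hd2 (by positivity))
            (Real.rpow_nonneg (norm_nonneg _) _) (Real.rpow_nonneg hε.le _))
            le_rfl (Real.rpow_nonneg (norm_nonneg _) _) (by positivity)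
      _ = (ε ^ (-(2 * a₁)) * ε ^ (-(2 * a₂))) * ‖x‖ ^ (-(2 * a₃)) := by ring
  -- Integrability on K
  have hIK : IntegrableOn f K := by
    have hKfin : volume K < ⊤ :=
      lt_of_le_of_lt (measure_mono Set.diff_subset) measure_closedBall_lt_top
    refine Integrable.mono'
      (g := fun _ => ε ^ (-(2 * a₁)) * ε ^ (-(2 * a₂)) * ε ^ (-(2 * a₃)))
      (integrableOn_const hKfin.ne)
      hmeasf.aestronglyMeasurable.restrict ?_
    have hKmeas : MeasurableSet K := by
      exact measurableSet_closedBall.diff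
        ((measurableSet_closedBall.union measurableSet_closedBall).union measurableSet_closedBall)
    filter_upwards [self_mem_ae_restrict hKmeas] with x hx
    rw [hK] at hx
    obtain ⟨-, hxn⟩ := hx
    simp only [hS₁, hS₂, hS₃, Set.mem_union, Metric.mem_closedBall, not_or, not_le] at hxn
    obtain ⟨⟨hn1, hn2⟩, hn3⟩ := hxn
    rw [dist_eq_norm] at hn1 hn2
    rw [dist_zero_right] at hn3
    rw [Real.norm_eq_abs, abs_of_nonneg (hfnn x)]
    rw [hfdef]
    exact mul_le_mul (mul_le_mul (hrp _ _ _ hε hn1.le (by positivity))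
      (hrp _ _ _ hε hn2.le (by positivity))
      (Real.rpow_nonneg (norm_nonneg _) _) (Real.rpow_nonneg hε.le _))
      (hrp _ _ _ hε hn3.le (by positivity)) (Real.rpow_nonneg (norm_nonneg _) _)
      (by positivity)
  -- Integrability on T (the tail)
  set q : ℝ := 2 * a₁ + 2 * a₂ + 2 * a₃ with hqdef
  have hq : (Module.finrank ℝ (EuclideanSpace ℝ (Fin d)) : ℝ) < q := by
    rw [finrank_euclideanSpace_fin, hqdef]; linarith
  have hIT : IntegrableOn f T := by
    refine Integrable.mono'
      (g := fun x => (4 : ℝ) ^ q * (1 + ‖x‖) ^ (-q))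
      (((integrable_one_add_norm (E := EuclideanSpace ℝ (Fin d)) hq).const_mul
        ((4 : ℝ) ^ q)).integrableOn)
      hmeasf.aestronglyMeasurable.restrict ?_
    filter_upwards [self_mem_ae_restrict hTmeas] with x hx
    have hxM : M ≤ ‖x‖ := hx
    have hn1 : (1 + ‖x‖) / 4 ≤ ‖x - x₁‖ := by
      have := norm_sub_norm_le x x₁
      have h1 := norm_nonneg x₁
      have h2 := norm_nonneg x₂
      simp only [hMdef] at hxM
      linarith
    have hn2 : (1 + ‖x‖) / 4 ≤ ‖x - x₂‖ := by
      have := norm_sub_norm_le x x₂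
      have h1 := norm_nonneg x₁
      have h2 := norm_nonneg x₂
      simp only [hMdef] at hxM
      linarith
    have hn3 : (1 + ‖x‖) / 4 ≤ ‖x‖ := by
      have h1 := norm_nonneg x₁
      have h2 := norm_nonneg x₂
      simp only [hMdef] at hxM
      linarith
    have hp : (0 : ℝ) < (1 + ‖x‖) / 4 := by
      have := norm_nonneg x
      positivity
    rw [Real.norm_eq_abs, abs_of_nonneg (hfnn x)]
    calc f x ≤ ((1 + ‖x‖) / 4) ^ (-(2 * a₁)) * ((1 + ‖x‖) / 4) ^ (-(2 * a₂))
        * ((1 + ‖x‖) / 4) ^ (-(2 * a₃)) := by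
          rw [hfdef]
          exact mul_le_mul (mul_le_mul (hrp _ _ _ hp hn1 (by positivity))
            (hrp _ _ _ hp hn2 (by positivity))
            (Real.rpow_nonneg (norm_nonneg _) _) (Real.rpow_nonneg hp.le _))
            (hrp _ _ _ hp hn3 (by positivity)) (Real.rpow_nonneg (norm_nonneg _) _)
            (by positivity)
      _ = ((1 + ‖x‖) / 4) ^ (-q) := by
          rw [← Real.rpow_add hp, ← Real.rpow_add hp, hqdef]
          ring_nf
      _ = (4 : ℝ) ^ q * (1 + ‖x‖) ^ (-q) := by
          rw [Real.div_rpow (by positivity) (by norm_num : (0:ℝ) ≤ 4),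
            Real.rpow_neg (by norm_num : (0:ℝ) ≤ 4)]
          field_simp
  -- Putting it together
  have cover : (Set.univ : Set (EuclideanSpace ℝ (Fin d))) ⊆ S₁ ∪ S₂ ∪ S₃ ∪ K ∪ T := by
    intro x _
    by_cases hxT : M ≤ ‖x‖
    · exact Set.mem_union_right _ hxT
    · by_cases hxS : x ∈ S₁ ∪ S₂ ∪ S₃
      · exact Set.mem_union_left _ (Set.mem_union_left _ hxS)
      · refine Set.mem_union_left _ (Set.mem_union_right _ ?_)
        rw [hK]
        exact ⟨Metric.mem_closedBall.2 (by rw [dist_zero_right]; linarith [not_le.1 hxT]), hxS⟩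
  rw [← integrableOn_univ]
  exact IntegrableOn.mono_set ((((hI1.union hI2).union hI3).union hIK).union hIT) cover
end

section
/- Let x₀, x₁, x₂ ∈ ℝ^d be pairwise distinct points with x₀ ≠ 0. Write X_{ab} = ‖x_a − x_b‖², let Z = Z(x₀|x₁,x₂) = (x₀ − x₁)/X_{01} − (x₀ − x₂)/X_{02}, and let Ẑ = Z/‖Z‖ and x̂₀ = x₀/‖x₀‖. Then the inner product ⟨Ẑ, x̂₀⟩ equals (1/2) · √(X_{01} X_{02} / (X_{12} · ‖x₀‖²)) · ( (‖x₀‖² − ‖x₁‖²)/X_{01} − (‖x₀‖² − ‖x₂‖²)/X_{02} ). -/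
open scoped RealInnerProductSpace

/-- The conformal three-point vector structure
`Z(xᵢ|xⱼ,xₖ) = (xᵢ-xⱼ)/‖xᵢ-xⱼ‖² - (xᵢ-xₖ)/‖xᵢ-xₖ‖²`. -/
noncomputable def Zvec {d : ℕ} (xi xj xk : EuclideanSpace ℝ (Fin d)) :
    EuclideanSpace ℝ (Fin d) :=
  (‖xi - xj‖ ^ 2)⁻¹ • (xi - xj) - (‖xi - xk‖ ^ 2)⁻¹ • (xi - xk)

/-- For pairwise distinct `x₀, x₁, x₂ ∈ ℝ^d` with `x₀ ≠ 0`, writing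
`X_{ab} = ‖x_a - x_b‖²`, `Ẑ = Z(x₀|x₁,x₂)/‖Z(x₀|x₁,x₂)‖` and `x̂₀ = x₀/‖x₀‖`,
one has `⟨Ẑ, x̂₀⟩ = (1/2) √(X₀₁X₀₂/(X₁₂‖x₀‖²)) ((‖x₀‖²-‖x₁‖²)/X₀₁ - (‖x₀‖²-‖x₂‖²)/X₀₂)`. -/
theorem Zhat_inner_formula {d : ℕ} (x₀ x₁ x₂ : EuclideanSpace ℝ (Fin d))
    (h01 : x₀ ≠ x₁) (h02 : x₀ ≠ x₂) (h12 : x₁ ≠ x₂) (h0 : x₀ ≠ 0) :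
    ⟪‖Zvec x₀ x₁ x₂‖⁻¹ • Zvec x₀ x₁ x₂, ‖x₀‖⁻¹ • x₀⟫ =
      (1 / 2) *
        Real.sqrt (‖x₀ - x₁‖ ^ 2 * ‖x₀ - x₂‖ ^ 2 / (‖x₁ - x₂‖ ^ 2 * ‖x₀‖ ^ 2)) *
        ((‖x₀‖ ^ 2 - ‖x₁‖ ^ 2) / ‖x₀ - x₁‖ ^ 2 -
          (‖x₀‖ ^ 2 - ‖x₂‖ ^ 2) / ‖x₀ - x₂‖ ^ 2) := by
  have ha : (0:ℝ) < ‖x₀ - x₁‖ := by rwa [norm_sub_pos_iff]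
  have hb : (0:ℝ) < ‖x₀ - x₂‖ := by rwa [norm_sub_pos_iff]
  have hc : (0:ℝ) < ‖x₁ - x₂‖ := by rwa [norm_sub_pos_iff]
  have hn : (0:ℝ) < ‖x₀‖ := by rwa [norm_pos_iff]
  set a := ‖x₀ - x₁‖ with hadef
  set b := ‖x₀ - x₂‖ with hbdef
  set c := ‖x₁ - x₂‖ with hcdef
  set n := ‖x₀‖ with hndef
  -- inner product t between the two legs
  have hc2 : c ^ 2 = a ^ 2 - 2 * ⟪x₀ - x₁, x₀ - x₂⟫ + b ^ 2 := by
    have : x₁ - x₂ = (x₀ - x₂) - (x₀ - x₁) := by abel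
    rw [hcdef, this, norm_sub_sq_real, real_inner_comm]
    ring
  -- norm of Z squared
  have hZ2 : ‖Zvec x₀ x₁ x₂‖ ^ 2 = c ^ 2 / (a ^ 2 * b ^ 2) := by
    set t := ⟪x₀ - x₁, x₀ - x₂⟫ with htdef
    rw [Zvec, norm_sub_sq_real, norm_smul, norm_smul,
      real_inner_smul_left, real_inner_smul_right, ← hadef, ← hbdef, ← htdef]
    rw [norm_inv, norm_inv, Real.norm_of_nonneg (by positivity : (0:ℝ) ≤ a ^ 2),
      Real.norm_of_nonneg (by positivity : (0:ℝ) ≤ b ^ 2)]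
    have ht : t = (a ^ 2 + b ^ 2 - c ^ 2) / 2 := by rw [hc2]; ring
    rw [ht]
    have ha2 : a ^ 2 ≠ 0 := by positivity
    have hb2 : b ^ 2 ≠ 0 := by positivity
    field_simp
    ring
  have hZnorm : ‖Zvec x₀ x₁ x₂‖ = c / (a * b) := by
    have h1 : ‖Zvec x₀ x₁ x₂‖ = Real.sqrt (‖Zvec x₀ x₁ x₂‖ ^ 2) := by
      rw [Real.sqrt_sq (norm_nonneg _)]
    rw [h1, hZ2]
    rw [show c ^ 2 / (a ^ 2 * b ^ 2) = (c / (a * b)) ^ 2 by ring,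
      Real.sqrt_sq (by positivity)]
  -- inner products with x₀
  have hi1 : ⟪x₀ - x₁, x₀⟫ = (n ^ 2 - ‖x₁‖ ^ 2 + a ^ 2) / 2 := by
    have h := norm_sub_sq_real x₀ x₁
    rw [← hadef, ← hndef] at h
    rw [inner_sub_left, real_inner_self_eq_norm_sq, ← hndef, real_inner_comm]
    linarith
  have hi2 : ⟪x₀ - x₂, x₀⟫ = (n ^ 2 - ‖x₂‖ ^ 2 + b ^ 2) / 2 := by
    have h := norm_sub_sq_real x₀ x₂
    rw [← hbdef, ← hndef] at h
    rw [inner_sub_left, real_inner_self_eq_norm_sq, ← hndef, real_inner_comm]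
    linarith
  have hZx : ⟪Zvec x₀ x₁ x₂, x₀⟫ =
      (1/2) * ((n ^ 2 - ‖x₁‖ ^ 2) / a ^ 2 - (n ^ 2 - ‖x₂‖ ^ 2) / b ^ 2) := by
    rw [Zvec, inner_sub_left, real_inner_smul_left, real_inner_smul_left,
      ← hadef, ← hbdef, hi1, hi2]
    have ha2 : a ^ 2 ≠ 0 := by positivity
    have hb2 : b ^ 2 ≠ 0 := by positivity
    field_simp
    ring
  have hsqrt : Real.sqrt (a ^ 2 * b ^ 2 / (c ^ 2 * n ^ 2)) = a * b / (c * n) := by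
    rw [show a ^ 2 * b ^ 2 / (c ^ 2 * n ^ 2) = (a * b / (c * n)) ^ 2 by ring,
      Real.sqrt_sq (by positivity)]
  rw [real_inner_smul_left, real_inner_smul_right, hZx, hZnorm, hsqrt, inv_div]
  ring
end

section
/- Let q ∈ (0,1), and let x, x₀ ∈ ℝ^d be nonzero points with x₀ ≠ x and x₀ ≠ q·x. Then ⟨Ẑ(x | x₀/q, x₀), x/‖x‖⟩ = ⟨Ẑ(x₀ | x, q·x), x₀/‖x₀‖⟩, where Ẑ(x_i|x_j,x_k) denotes the unit vector in the direction of Z(x_i|x_j,x_k). (This is the statement that, after the rescaling x₀ → x₀/q of the integration variable, the Gegenbauer argument of the spinning thermal partial-wave integrand coincides with the Gegenbauer argument of the spinning defect partial-wave integrand in the diagonal configuration x₁ = x, x₂ = qx.) -/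
open scoped RealInnerProductSpace

/-- The unit vector `Ẑ(xᵢ|xⱼ,xₖ) = Z(xᵢ|xⱼ,xₖ)/‖Z(xᵢ|xⱼ,xₖ)‖`. -/
noncomputable def Zhat {d : ℕ} (xi xj xk : EuclideanSpace ℝ (Fin d)) :
    EuclideanSpace ℝ (Fin d) :=
  ‖Zvec xi xj xk‖⁻¹ • Zvec xi xj xk

/-- After the rescaling `x₀ → x₀/q` of the integration variable, the Gegenbauer
argument of the spinning thermal partial-wave integrand coincides with the
Gegenbauer argument of the spinning defect partial-wave integrand in the diagonal
configuration `x₁ = x`, `x₂ = qx`: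
`⟨Ẑ(x | x₀/q, x₀), x/‖x‖⟩ = ⟨Ẑ(x₀ | x, qx), x₀/‖x₀‖⟩`. -/
theorem gegenbauer_arguments_match {d : ℕ}
    (q : ℝ) (hq : q ∈ Set.Ioo (0 : ℝ) 1)
    (x x₀ : EuclideanSpace ℝ (Fin d))
    (hx : x ≠ 0) (hx₀ : x₀ ≠ 0) (hne : x₀ ≠ x) (hne' : x₀ ≠ q • x) :
    ⟪Zhat x (q⁻¹ • x₀) x₀, ‖x‖⁻¹ • x⟫ =
      ⟪Zhat x₀ x (q • x), ‖x₀‖⁻¹ • x₀⟫ := by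
  obtain ⟨hq0, hq1⟩ := hq
  have hqne : q ≠ 0 := ne_of_gt hq0
  set α : ℝ := ‖x₀ - x‖ ^ 2 with hα
  set β : ℝ := ‖x₀ - q • x‖ ^ 2 with hβ
  have hα0 : α ≠ 0 := pow_ne_zero _ (norm_ne_zero_iff.mpr (sub_ne_zero.mpr hne))
  have hβ0 : β ≠ 0 := pow_ne_zero _ (norm_ne_zero_iff.mpr (sub_ne_zero.mpr hne'))
  -- rewrite the first Z vector
  have h1 : x - q⁻¹ • x₀ = (-q⁻¹) • (x₀ - q • x) := by
    match_scalars <;> field_simp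
  have h2 : ‖x - q⁻¹ • x₀‖ ^ 2 = q⁻¹ ^ 2 * β := by
    rw [h1, norm_smul, Real.norm_eq_abs, mul_pow, sq_abs, neg_pow]
    ring
  have hA : Zvec x (q⁻¹ • x₀) x₀ = α⁻¹ • (x₀ - x) - (q * β⁻¹) • (x₀ - q • x) := by
    unfold Zvec
    rw [h2, h1, norm_sub_rev x x₀, ← hα]
    match_scalars <;> field_simp <;> ring
  have hB : Zvec x₀ x (q • x) = α⁻¹ • (x₀ - x) - β⁻¹ • (x₀ - q • x) := by
    unfold Zvec
    rw [← hα, ← hβ]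
  -- inner-product values
  have hαv : α = ⟪x₀, x₀⟫ - 2 * ⟪x₀, x⟫ + ⟪x, x⟫ := by
    rw [hα, norm_sub_sq_real, real_inner_self_eq_norm_sq, real_inner_self_eq_norm_sq]
  have hβv : β = ⟪x₀, x₀⟫ - 2 * (q * ⟪x₀, x⟫) + q ^ 2 * ⟪x, x⟫ := by
    rw [hβ, norm_sub_sq_real, real_inner_self_eq_norm_sq, real_inner_smul_right,
      norm_smul, Real.norm_eq_abs, mul_pow, sq_abs, real_inner_self_eq_norm_sq]
  have hcomm : ⟪x, x₀⟫ = ⟪x₀, x⟫ := real_inner_comm x₀ x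
  -- key equality of inner products
  have key1 : ⟪Zvec x (q⁻¹ • x₀) x₀, x⟫ = ⟪Zvec x₀ x (q • x), x₀⟫ := by
    rw [hA, hB]
    simp only [inner_sub_left, real_inner_smul_left, inner_sub_right,
      real_inner_smul_right, hcomm]
    rw [hαv] at hα0
    rw [hβv] at hβ0
    rw [hαv, hβv]
    set R : ℝ := ⟪x, x⟫ with hR
    set S : ℝ := ⟪x₀, x₀⟫ with hS
    set T : ℝ := ⟪x₀, x⟫ with hT
    clear_value R S T
    have hβ0'' : S - 2 * T * q + R * q ^ 2 ≠ 0 := by convert hβ0 using 1; ring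
    field_simp
    ring
  -- key equality of norms
  have key2 : ‖Zvec x (q⁻¹ • x₀) x₀‖ * ‖x‖ = ‖Zvec x₀ x (q • x)‖ * ‖x₀‖ := by
    have hsq : (‖Zvec x (q⁻¹ • x₀) x₀‖ * ‖x‖) ^ 2 =
        (‖Zvec x₀ x (q • x)‖ * ‖x₀‖) ^ 2 := by
      rw [mul_pow, mul_pow, ← real_inner_self_eq_norm_sq (Zvec x (q⁻¹ • x₀) x₀),
        ← real_inner_self_eq_norm_sq (Zvec x₀ x (q • x)),
        ← real_inner_self_eq_norm_sq x, ← real_inner_self_eq_norm_sq x₀, hA, hB]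
      simp only [inner_sub_left, real_inner_smul_left, inner_sub_right,
        real_inner_smul_right, hcomm]
      rw [hαv] at hα0
      rw [hβv] at hβ0
      rw [hαv, hβv]
      set R : ℝ := ⟪x, x⟫ with hR
      set S : ℝ := ⟪x₀, x₀⟫ with hS
      set T : ℝ := ⟪x₀, x⟫ with hT
      clear_value R S T
      have hβ0'' : S - 2 * T * q + R * q ^ 2 ≠ 0 := by convert hβ0 using 1; ring
      field_simp
      ring
    have h0 : 0 ≤ ‖Zvec x (q⁻¹ • x₀) x₀‖ * ‖x‖ := by positivity
    have h0' : 0 ≤ ‖Zvec x₀ x (q • x)‖ * ‖x₀‖ := by positivity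
    calc ‖Zvec x (q⁻¹ • x₀) x₀‖ * ‖x‖
        = Real.sqrt ((‖Zvec x (q⁻¹ • x₀) x₀‖ * ‖x‖) ^ 2) := (Real.sqrt_sq h0).symm
      _ = Real.sqrt ((‖Zvec x₀ x (q • x)‖ * ‖x₀‖) ^ 2) := by rw [hsq]
      _ = ‖Zvec x₀ x (q • x)‖ * ‖x₀‖ := Real.sqrt_sq h0'
  -- conclude
  simp only [Zhat, real_inner_smul_left, real_inner_smul_right]
  rw [key1]
  have h3 : ‖x‖⁻¹ * ‖Zvec x (q⁻¹ • x₀) x₀‖⁻¹ = ‖x₀‖⁻¹ * ‖Zvec x₀ x (q • x)‖⁻¹ := by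
    rw [← mul_inv, ← mul_inv, mul_comm ‖x‖, mul_comm ‖x₀‖, key2]
  rw [← mul_assoc, ← mul_assoc, h3]
end
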